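/- Let c > 0 and let A₀ ∈ End(V) and S₀ a symmetric endomorphism of a finite-dimensional real inner product space V. Suppose J(t) = cos(√c t)·I − (sin(√c t)/√c)·A₀ is invertible for all t ∈ [0, π/√c) and S(t) = S₀·J(t)⁻¹ is symmetric with constant signature on [0, π/√c). Since J(t) → −I as t → π/√c, in the limit S(t) → −S₀; by constancy of the numbers of positive and negative eigenvalues, S₀ has equally many positive and negative eigenvalues. In particular, if S₀ is positive semidefinite or negative semidefinite, then S₀ = 0. -/

import Mathlib

/-!
Along the path `t ↦ S(t)` the endomorphism `J(t)` tends to `J(π/√c) = -1`, so `S(t) → -S₀`.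
The positive index is lower semicontinuous (a subspace on which the quadratic form is positive
definite stays so under small perturbations, by compactness of its unit sphere), hence so is
the negative index. Comparing `S(t)` for `t` close to `π/√c` with `-S₀` gives
`negIndex S₀ = posIndex (-S₀) ≤ posIndex S(t) = posIndex S₀` and symmetrically
`posIndex S₀ ≤ negIndex S₀`. A semidefinite `S₀` then has both indices zero, so its quadratic
form vanishes and, being symmetric, `S₀ = 0`.
-/

open scoped RealInnerProductSpace

/-- The maximal dimension of a subspace on which the quadratic form of `T` is
positive definite (the number of positive eigenvalues when `T` is symmetric). -/
noncomputable def posIndex {V : Type*} [NormedAddCommGroup V]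
    [InnerProductSpace ℝ V] [FiniteDimensional ℝ V] (T : V →ₗ[ℝ] V) : ℕ :=
  sSup {d | ∃ W : Submodule ℝ V, Module.finrank ℝ W = d ∧
    ∀ v ∈ W, v ≠ 0 → 0 < ⟪T v, v⟫}

/-- The number of negative eigenvalues of a symmetric endomorphism. -/
noncomputable def negIndex {V : Type*} [NormedAddCommGroup V]
    [InnerProductSpace ℝ V] [FiniteDimensional ℝ V] (T : V →ₗ[ℝ] V) : ℕ :=
  sSup {d | ∃ W : Submodule ℝ V, Module.finrank ℝ W = d ∧
    ∀ v ∈ W, v ≠ 0 → ⟪T v, v⟫ < 0}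

open Filter Topology Real

section Index

variable {V : Type*} [NormedAddCommGroup V] [InnerProductSpace ℝ V]

theorem inner_map_self_pos_of_pos_on_sphere {T : V →ₗ[ℝ] V} {W : Submodule ℝ V}
    (h : ∀ v ∈ (W : Set V) ∩ Metric.sphere 0 1, 0 < ⟪T v, v⟫) :
    ∀ v ∈ W, v ≠ 0 → 0 < ⟪T v, v⟫ := by
  intro v hv hv0
  have hr : 0 < ‖v‖⁻¹ := inv_pos.mpr (norm_pos_iff.mpr hv0)
  have hu := h (‖v‖⁻¹ • v) ⟨W.smul_mem _ hv, by simp [norm_smul, hv0]⟩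
  rw [map_smul, real_inner_smul_left, real_inner_smul_right] at hu
  exact pos_of_mul_pos_right (pos_of_mul_pos_right hu hr.le) hr.le

variable [FiniteDimensional ℝ V]

theorem finrank_le_posIndex (T : V →ₗ[ℝ] V) (W : Submodule ℝ V)
    (hW : ∀ v ∈ W, v ≠ 0 → 0 < ⟪T v, v⟫) : Module.finrank ℝ W ≤ posIndex T :=
  le_csSup ⟨Module.finrank ℝ V, by rintro _ ⟨W', rfl, -⟩; exact W'.finrank_le⟩ ⟨W, rfl, hW⟩

theorem exists_finrank_eq_posIndex (T : V →ₗ[ℝ] V) :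
    ∃ W : Submodule ℝ V, Module.finrank ℝ W = posIndex T ∧ ∀ v ∈ W, v ≠ 0 → 0 < ⟪T v, v⟫ :=
  Nat.sSup_mem (s := {d | ∃ W : Submodule ℝ V, Module.finrank ℝ W = d ∧
      ∀ v ∈ W, v ≠ 0 → 0 < ⟪T v, v⟫})
    ⟨0, ⊥, finrank_bot ℝ V, fun _ hv hv0 => absurd hv hv0⟩
    ⟨Module.finrank ℝ V, by rintro _ ⟨W', rfl, -⟩; exact W'.finrank_le⟩

theorem posIndex_neg (T : V →ₗ[ℝ] V) : posIndex (-T) = negIndex T := by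
  simp only [posIndex, negIndex, LinearMap.neg_apply, inner_neg_left, neg_pos]

theorem negIndex_neg (T : V →ₗ[ℝ] V) : negIndex (-T) = posIndex T := by
  rw [← posIndex_neg, neg_neg]

theorem posIndex_eq_zero_iff (T : V →ₗ[ℝ] V) : posIndex T = 0 ↔ ∀ v, ⟪T v, v⟫ ≤ 0 := by
  constructor
  · intro h v
    by_contra! hv
    have hv0 : v ≠ 0 := by rintro rfl; simp at hv
    have hspan : ∀ w ∈ ℝ ∙ v, w ≠ 0 → 0 < ⟪T w, w⟫ := by
      intro w hw hw0
      obtain ⟨a, rfl⟩ := Submodule.mem_span_singleton.mp hw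
      have ha : a ≠ 0 := by rintro rfl; simp at hw0
      rw [map_smul, real_inner_smul_left, real_inner_smul_right, ← mul_assoc]
      exact mul_pos (mul_self_pos.mpr ha) hv
    have := finrank_le_posIndex T _ hspan
    rw [finrank_span_singleton hv0, h] at this
    omega
  · intro h
    obtain ⟨W, hW, hpos⟩ := exists_finrank_eq_posIndex T
    rw [← hW, Submodule.finrank_eq_zero]
    by_contra hne
    obtain ⟨v, hvW, hv0⟩ := Submodule.exists_mem_ne_zero_of_ne_bot hne
    exact (hpos v hvW hv0).not_ge (h v)

theorem negIndex_eq_zero_iff (T : V →ₗ[ℝ] V) : negIndex T = 0 ↔ ∀ v, 0 ≤ ⟪T v, v⟫ := by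
  simp [← posIndex_neg, posIndex_eq_zero_iff, inner_neg_left]

theorem posIndex_eventually_le (T : V →L[ℝ] V) :
    ∀ᶠ T' : V →L[ℝ] V in 𝓝 T, posIndex (T : V →ₗ[ℝ] V) ≤ posIndex (T' : V →ₗ[ℝ] V) := by
  obtain ⟨W, hW, hpos⟩ := exists_finrank_eq_posIndex (T : V →ₗ[ℝ] V)
  have hK : IsCompact ((W : Set V) ∩ Metric.sphere 0 1) :=
    (isCompact_sphere 0 1).inter_left W.closed_of_finiteDimensional
  have hquad : Continuous fun p : (V →L[ℝ] V) × V => ⟪p.1 p.2, p.2⟫ :=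
    (continuous_fst.clm_apply continuous_snd).inner continuous_snd
  have hnear : ∀ᶠ T' in 𝓝 T, ∀ v ∈ (W : Set V) ∩ Metric.sphere 0 1, 0 < ⟪T' v, v⟫ := by
    refine hK.eventually_forall_of_forall_eventually fun v hv => ?_
    have hv0 : v ≠ 0 := ne_zero_of_mem_unit_sphere ⟨v, hv.2⟩
    exact hquad.continuousAt.eventually (lt_mem_nhds (hpos v hv.1 hv0))
  filter_upwards [hnear] with T' hT'
  exact hW ▸ finrank_le_posIndex _ W (inner_map_self_pos_of_pos_on_sphere hT')

theorem negIndex_eventually_le (T : V →L[ℝ] V) :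
    ∀ᶠ T' : V →L[ℝ] V in 𝓝 T, negIndex (T : V →ₗ[ℝ] V) ≤ negIndex (T' : V →ₗ[ℝ] V) := by
  have := continuous_neg.continuousAt.eventually (posIndex_eventually_le (-T))
  simpa only [ContinuousLinearMap.toLinearMap_neg, posIndex_neg] using this

theorem LinearMap.IsSymmetric.eq_zero_of_posIndex_eq_negIndex {T : V →ₗ[ℝ] V}
    (hT : T.IsSymmetric) (hindex : posIndex T = negIndex T)
    (hsemi : (∀ v, 0 ≤ ⟪T v, v⟫) ∨ ∀ v, ⟪T v, v⟫ ≤ 0) : T = 0 := by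
  refine hT.inner_map_self_eq_zero.mp fun v => ?_
  rcases hsemi with h | h
  · have hpos := (posIndex_eq_zero_iff T).mp (hindex.trans ((negIndex_eq_zero_iff T).mpr h))
    exact (hpos v).antisymm (h v)
  · have hneg := (negIndex_eq_zero_iff T).mp (hindex.symm.trans ((posIndex_eq_zero_iff T).mpr h))
    exact (h v).antisymm (hneg v)

end Index

theorem Ring.inverse_neg_one {R : Type*} [Ring R] : Ring.inverse (-1 : R) = -1 := by
  simpa using Ring.inverse_unit (-1 : Rˣ)

theorem tendsto_mul_inverse_cos_sub_sin_smul {R : Type*} [NormedRing R] [NormedAlgebra ℝ R]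
    [HasSummableGeomSeries R] {c : ℝ} (hc : 0 < c) (A S : R) :
    Tendsto (fun t => S * Ring.inverse (cos (√c * t) • (1 : R) - (sin (√c * t) / √c) • A))
      (𝓝 (π / √c)) (𝓝 (-S)) := by
  have hJ : Continuous fun t => cos (√c * t) • (1 : R) - (sin (√c * t) / √c) • A := by
    fun_prop
  have hJpi : cos (√c * (π / √c)) • (1 : R) - (sin (√c * (π / √c)) / √c) • A = -1 := by
    rw [mul_div_cancel₀ _ (sqrt_pos.mpr hc).ne', cos_pi, sin_pi]
    simp
  have hinv : ContinuousAt Ring.inverse (-1 : R) := by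
    simpa using NormedRing.inverse_continuousAt (-1 : Rˣ)
  have := (hinv.comp_of_eq hJ.continuousAt hJpi).const_mul S
  simpa [hJpi, Ring.inverse_neg_one] using this.tendsto

theorem stmt_16_general {V : Type*} [NormedAddCommGroup V] [InnerProductSpace ℝ V]
    [FiniteDimensional ℝ V]
    (c : ℝ) (hc : 0 < c) (A₀ S₀ : V →L[ℝ] V) (J : ℝ → (V →L[ℝ] V))
    (hS₀ : LinearMap.IsSymmetric (S₀ : V →ₗ[ℝ] V))
    (hJdef : ∀ t : ℝ, J t =
      Real.cos (Real.sqrt c * t) • (1 : V →L[ℝ] V)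
        - (Real.sin (Real.sqrt c * t) / Real.sqrt c) • A₀)
    (hsig : ∀ t ∈ Set.Ico (0 : ℝ) (Real.pi / Real.sqrt c),
      posIndex ((S₀ * Ring.inverse (J t) : V →L[ℝ] V) : V →ₗ[ℝ] V) =
          posIndex (S₀ : V →ₗ[ℝ] V) ∧
        negIndex ((S₀ * Ring.inverse (J t) : V →L[ℝ] V) : V →ₗ[ℝ] V) =
          negIndex (S₀ : V →ₗ[ℝ] V)) :
    posIndex (S₀ : V →ₗ[ℝ] V) = negIndex (S₀ : V →ₗ[ℝ] V) ∧
      (((∀ v : V, 0 ≤ ⟪S₀ v, v⟫) ∨ (∀ v : V, ⟪S₀ v, v⟫ ≤ 0)) → S₀ = 0) := by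
  have hlim : Tendsto (fun t => S₀ * Ring.inverse (J t)) (𝓝[<] (π / √c)) (𝓝 (-S₀)) := by
    simpa only [hJdef] using
      (tendsto_mul_inverse_cos_sub_sin_smul hc A₀ S₀).mono_left nhdsWithin_le_nhds
  obtain ⟨t, ht, hpos, hneg⟩ :=
    (Filter.Eventually.and (Ico_mem_nhdsLT (div_pos pi_pos (sqrt_pos.mpr hc))) <|
      (hlim.eventually (posIndex_eventually_le (-S₀))).and
        (hlim.eventually (negIndex_eventually_le (-S₀)))).exists
  rw [ContinuousLinearMap.toLinearMap_neg, posIndex_neg, (hsig t ht).1] at hpos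
  rw [ContinuousLinearMap.toLinearMap_neg, negIndex_neg, (hsig t ht).2] at hneg
  have hindex := le_antisymm hneg hpos
  exact ⟨hindex, fun hsemi =>
    ContinuousLinearMap.coe_injective (hS₀.eq_zero_of_posIndex_eq_negIndex hindex hsemi)⟩

/-- for `c > 0`, `J(t) = cos(√c t)·I − (sin(√c t)/√c)·A₀` invertible
on `[0, π/√c)` and `S(t) = S₀·J(t)⁻¹` symmetric with constant signature, the
numbers of positive and negative eigenvalues of `S₀` coincide; in particular a
semidefinite `S₀` vanishes. -/
theorem stmt_16 {V : Type*} [NormedAddCommGroup V] [InnerProductSpace ℝ V]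
    [FiniteDimensional ℝ V]
    (c : ℝ) (hc : 0 < c) (A₀ S₀ : V →L[ℝ] V) (J : ℝ → (V →L[ℝ] V))
    (hS₀ : LinearMap.IsSymmetric (S₀ : V →ₗ[ℝ] V))
    (hJdef : ∀ t : ℝ, J t =
      Real.cos (Real.sqrt c * t) • (1 : V →L[ℝ] V)
        - (Real.sin (Real.sqrt c * t) / Real.sqrt c) • A₀)
    (hJinv : ∀ t ∈ Set.Ico (0 : ℝ) (Real.pi / Real.sqrt c), IsUnit (J t))
    (hsymm : ∀ t ∈ Set.Ico (0 : ℝ) (Real.pi / Real.sqrt c),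
      LinearMap.IsSymmetric ((S₀ * Ring.inverse (J t) : V →L[ℝ] V) : V →ₗ[ℝ] V))
    (hsig : ∀ t ∈ Set.Ico (0 : ℝ) (Real.pi / Real.sqrt c),
      posIndex ((S₀ * Ring.inverse (J t) : V →L[ℝ] V) : V →ₗ[ℝ] V) =
          posIndex (S₀ : V →ₗ[ℝ] V) ∧
        negIndex ((S₀ * Ring.inverse (J t) : V →L[ℝ] V) : V →ₗ[ℝ] V) =
          negIndex (S₀ : V →ₗ[ℝ] V)) :
    posIndex (S₀ : V →ₗ[ℝ] V) = negIndex (S₀ : V →ₗ[ℝ] V) ∧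
      (((∀ v : V, 0 ≤ ⟪S₀ v, v⟫) ∨ (∀ v : V, ⟪S₀ v, v⟫ ≤ 0)) → S₀ = 0) :=
  stmt_16_general c hc A₀ S₀ J hS₀ hJdef hsig
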